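/- Under the stated hypotheses, for all indices 1 ≤ i, j ≤ n−1 with |i−j| = 1, the braid relation σ_i σ_j σ_i = σ_j σ_i σ_j holds in M. -/

import Mathlib

/-!
Put `Aₘ = shiftWord v m`, so that `σ_{m+1} = Aₘ σ Aₘ⁻¹`. Conjugating by `Aₘ` turns the braid
relation between `σ_{m+1}` and `σ_{m+2}` into one between `σ` and
`Pₘ = (Aₘ⁻¹ Aₘ₊₁) σ (Aₘ₊₁⁻¹ Aₘ)`. For `m = 0` this is the hypothesis on `σ` and `v₁v₂σv₂v₁`.
The braid relations among the `vᵢ` give `Pₘ₊₁ = vₘ₊₃ Pₘ vₘ₊₃`, and `vₘ₊₃` is an involution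
commuting with `σ`, so the relation for `Pₘ` is carried to `Pₘ₊₁` by conjugation.
-/

namespace VSBpaper

/-- `ascV v a b = v a * v (a+1) * ⋯ * v b` (equal to `1` when `b < a`). -/
def ascV {M : Type*} [Monoid M] (v : ℕ → M) (a b : ℕ) : M :=
  ((List.range' a (b + 1 - a)).map v).prod

/-- `descV v a b = v b * v (b-1) * ⋯ * v a` (equal to `1` when `b < a`). -/
def descV {M : Type*} [Monoid M] (v : ℕ → M) (a b : ℕ) : M :=
  (((List.range' a (b + 1 - a)).map v).reverse).prod

theorem _root_.List.prod_mul_prod_reverse_of_mul_self {M : Type*} [Monoid M] {l : List M}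
    (h : ∀ x ∈ l, x * x = 1) : l.prod * l.reverse.prod = 1 := by
  induction l with
  | nil => simp
  | cons x l ih =>
    have hl : l.prod * l.reverse.prod = 1 := ih fun y hy => h y (List.mem_cons_of_mem x hy)
    calc (x :: l).prod * (x :: l).reverse.prod = x * (l.prod * l.reverse.prod) * x := by
          simp [mul_assoc]
      _ = 1 := by rw [hl, mul_one, h x List.mem_cons_self]

section Monoid

variable {M : Type*} [Monoid M]

theorem braid_conj {a b x y : M} (hba : b * a = 1) (h : x * y * x = y * x * y) :
    a * x * b * (a * y * b) * (a * x * b) = a * y * b * (a * x * b) * (a * y * b) := by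
  have hmul : ∀ p q : M, a * p * b * (a * q * b) = a * (p * q) * b := fun p q => by
    simp only [mul_assoc]
    rw [← mul_assoc b a, hba, one_mul]
  rw [hmul, hmul, hmul, hmul, h]

theorem braid_conj_of_commute {c x y : M} (hc : c * c = 1) (hxc : Commute x c)
    (h : x * y * x = y * x * y) : x * (c * y * c) * x = c * y * c * x * (c * y * c) := by
  have hx : c * x * c = x := by rw [← hxc.eq, mul_assoc, hc, mul_one]
  simpa only [hx] using braid_conj hc h

theorem braid_shift_left {a b c : M} (hab : a * b * a = b * a * b) (hbc : b * c * b = c * b * c)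
    (hac : Commute a c) (ha : a * a = 1) : b * a * b * c * a * b = c * a * b * c := by
  have hcac : a * c * a = c := by rw [hac.eq, mul_assoc, ha, mul_one]
  calc b * a * b * c * a * b = a * b * (a * c * a) * b := by
        rw [← hab]; simp only [mul_assoc]
    _ = a * (b * c * b) := by rw [hcac]; simp only [mul_assoc]
    _ = c * a * b * c := by rw [hbc, ← mul_assoc, ← mul_assoc, hac.eq]

theorem braid_shift_right {a b c : M} (hab : a * b * a = b * a * b) (hbc : b * c * b = c * b * c)
    (hac : Commute a c) (ha : a * a = 1) : b * a * c * b * a * b = c * b * a * c := by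
  have hcac : a * c * a = c := by rw [hac.eq, mul_assoc, ha, mul_one]
  calc b * a * c * b * a * b = b * (a * c * a) * b * a := by
        rw [mul_assoc _ b a, mul_assoc _ (b * a) b, ← hab]; simp only [mul_assoc]
    _ = c * b * a * c := by rw [hcac, hbc, mul_assoc _ c a, ← hac.eq]; simp only [mul_assoc]

end Monoid

theorem forall_mem_map_range' {M : Type*} (v : ℕ → M) {p : M → Prop} {a b : ℕ}
    (h : ∀ k, a ≤ k → k ≤ b → p (v k)) :
    ∀ x ∈ (List.range' a (b + 1 - a)).map v, p x := by
  simp only [List.mem_map, List.mem_range'_1]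
  rintro _ ⟨k, hk, rfl⟩
  exact h k hk.1 (by omega)

section Words

variable {M : Type*} [Monoid M] (v : ℕ → M)

theorem ascV_succ {a b : ℕ} (h : a ≤ b + 1) : ascV v a (b + 1) = ascV v a b * v (b + 1) := by
  rw [ascV, ascV, show b + 1 + 1 - a = (b + 1 - a) + 1 by omega, List.range'_concat,
    show a + 1 * (b + 1 - a) = b + 1 by omega]
  simp

theorem descV_succ {a b : ℕ} (h : a ≤ b + 1) : descV v a (b + 1) = v (b + 1) * descV v a b := by
  rw [descV, descV, show b + 1 + 1 - a = (b + 1 - a) + 1 by omega, List.range'_concat,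
    show a + 1 * (b + 1 - a) = b + 1 by omega]
  simp

theorem ascV_mul_descV {a b : ℕ} (h : ∀ k, a ≤ k → k ≤ b → v k * v k = 1) :
    ascV v a b * descV v a b = 1 :=
  List.prod_mul_prod_reverse_of_mul_self (forall_mem_map_range' v h)

theorem descV_mul_ascV {a b : ℕ} (h : ∀ k, a ≤ k → k ≤ b → v k * v k = 1) :
    descV v a b * ascV v a b = 1 := by
  simpa [ascV, descV] using List.prod_mul_prod_reverse_of_mul_self
    fun x hx => forall_mem_map_range' v (p := fun y => y * y = 1) h x (List.mem_reverse.mp hx)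

theorem commute_ascV {x : M} {a b : ℕ} (h : ∀ k, a ≤ k → k ≤ b → Commute x (v k)) :
    Commute x (ascV v a b) :=
  .list_prod_right _ _ (forall_mem_map_range' v h)

theorem commute_descV {x : M} {a b : ℕ} (h : ∀ k, a ≤ k → k ≤ b → Commute x (v k)) :
    Commute x (descV v a b) :=
  .list_prod_right _ _ fun y hy => forall_mem_map_range' v h y (List.mem_reverse.mp hy)

end Words

section Definitions

variable {M : Type*} [Monoid M]

structure SymmetricRelations (n : ℕ) (v : ℕ → M) : Prop where
  braid : ∀ i, 1 ≤ i → i + 1 ≤ n - 1 → v i * v (i + 1) * v i = v (i + 1) * v i * v (i + 1)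
  comm : ∀ i j, 1 ≤ i → j ≤ n - 1 → i + 1 < j → Commute (v i) (v j)
  sq : ∀ i, 1 ≤ i → i ≤ n - 1 → v i * v i = 1

/-- The word `(v m ⋯ v 1)(v (m+1) ⋯ v 2)` by which `σ₁` is conjugated to `σ_{m+1}`. -/
def shiftWord (v : ℕ → M) (m : ℕ) : M :=
  descV v 1 m * descV v 2 (m + 1)

def shiftWordRev (v : ℕ → M) (m : ℕ) : M :=
  ascV v 2 (m + 1) * ascV v 1 m

def stepWord (v : ℕ → M) (m : ℕ) : M :=
  shiftWordRev v m * shiftWord v (m + 1)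

def stepWordRev (v : ℕ → M) (m : ℕ) : M :=
  shiftWordRev v (m + 1) * shiftWord v m

/-- In the frame where `σ_{m+1}` is `σ`, this is `σ_{m+2}`: see `shiftWord_conj_succ`. -/
def braidPartner (v : ℕ → M) (σ : M) (m : ℕ) : M :=
  stepWord v m * σ * stepWordRev v m

end Definitions

namespace SymmetricRelations

variable {M : Type*} [Monoid M] {n : ℕ} {v : ℕ → M} (hv : SymmetricRelations n v) {σ : M}
include hv

theorem shiftWordRev_mul_shiftWord {m : ℕ} (hm : m + 1 ≤ n - 1) :
    shiftWordRev v m * shiftWord v m = 1 := by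
  have h1 := ascV_mul_descV v (a := 1) (b := m) fun k hk hk' => hv.sq k hk (by omega)
  have h2 := ascV_mul_descV v (a := 2) (b := m + 1) fun k hk hk' => hv.sq k (by omega) (by omega)
  rw [shiftWordRev, shiftWord, mul_assoc, ← mul_assoc (ascV v 1 m), h1, one_mul, h2]

theorem shiftWord_mul_shiftWordRev {m : ℕ} (hm : m + 1 ≤ n - 1) :
    shiftWord v m * shiftWordRev v m = 1 := by
  have h1 := descV_mul_ascV v (a := 1) (b := m) fun k hk hk' => hv.sq k hk (by omega)
  have h2 := descV_mul_ascV v (a := 2) (b := m + 1) fun k hk hk' => hv.sq k (by omega) (by omega)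
  rw [shiftWordRev, shiftWord, mul_assoc, ← mul_assoc (descV v 2 (m + 1)), h2, one_mul, h1]

theorem shiftWord_succ {m : ℕ} (hm : m + 2 ≤ n - 1) :
    shiftWord v (m + 1) = v (m + 1) * v (m + 2) * shiftWord v m := by
  have hc : Commute (descV v 1 m) (v (m + 2)) :=
    (commute_descV v fun k hk hk' => (hv.comm k (m + 2) hk hm (by omega)).symm).symm
  rw [shiftWord, shiftWord, descV_succ v (a := 1) (b := m) (by omega),
    descV_succ v (a := 2) (b := m + 1) (by omega), mul_assoc,
    ← mul_assoc (descV v 1 m), hc.eq]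
  simp only [mul_assoc]

theorem shiftWordRev_succ {m : ℕ} (hm : m + 2 ≤ n - 1) :
    shiftWordRev v (m + 1) = shiftWordRev v m * v (m + 2) * v (m + 1) := by
  have hc : Commute (v (m + 2)) (ascV v 1 m) :=
    commute_ascV v fun k hk hk' => (hv.comm k (m + 2) hk hm (by omega)).symm
  rw [shiftWordRev, shiftWordRev, ascV_succ v (a := 1) (b := m) (by omega),
    ascV_succ v (a := 2) (b := m + 1) (by omega)]
  simp only [mul_assoc]
  rw [← hc.left_comm]

theorem commute_shiftWord {m : ℕ} (hm : m + 3 ≤ n - 1) : Commute (v (m + 3)) (shiftWord v m) :=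
  .mul_right (commute_descV v fun k hk hk' => (hv.comm k (m + 3) hk hm (by omega)).symm)
    (commute_descV v fun k hk hk' => (hv.comm k (m + 3) (by omega) hm (by omega)).symm)

theorem commute_shiftWordRev {m : ℕ} (hm : m + 3 ≤ n - 1) :
    Commute (v (m + 3)) (shiftWordRev v m) :=
  .mul_right (commute_ascV v fun k hk hk' => (hv.comm k (m + 3) (by omega) hm (by omega)).symm)
    (commute_ascV v fun k hk hk' => (hv.comm k (m + 3) hk hm (by omega)).symm)

theorem shiftWord_conj_succ {m : ℕ} (hm : m + 2 ≤ n - 1) (x : M) :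
    shiftWord v (m + 1) * x * shiftWordRev v (m + 1) =
      shiftWord v m * (stepWord v m * x * stepWordRev v m) * shiftWordRev v m := by
  have h := hv.shiftWord_mul_shiftWordRev (m := m) (by omega)
  simp only [stepWord, stepWordRev, ← mul_assoc, h, one_mul]
  simp only [mul_assoc, h, mul_one]

theorem stepWord_zero (hn : 2 ≤ n - 1) : stepWord v 0 = v 1 * v 2 := by
  rw [stepWord, hv.shiftWord_succ hn]
  simp [shiftWord, shiftWordRev, ascV, descV]

theorem stepWordRev_zero (hn : 2 ≤ n - 1) : stepWordRev v 0 = v 2 * v 1 := by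
  rw [stepWordRev, hv.shiftWordRev_succ hn]
  simp [shiftWord, shiftWordRev, ascV, descV]

theorem stepWord_succ {m : ℕ} (hm : m + 3 ≤ n - 1) :
    stepWord v (m + 1) = v (m + 3) * stepWord v m * v (m + 3) := by
  have hword : v (m + 2) * v (m + 1) * v (m + 2) * v (m + 3) * v (m + 1) * v (m + 2) =
      v (m + 3) * v (m + 1) * v (m + 2) * v (m + 3) :=
    braid_shift_left (hv.braid _ (by omega) (by omega)) (hv.braid _ (by omega) (by omega))
      (hv.comm _ _ (by omega) hm (by omega)) (hv.sq _ (by omega) (by omega))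
  calc stepWord v (m + 1)
      = shiftWordRev v m *
          (v (m + 2) * v (m + 1) * v (m + 2) * v (m + 3) * v (m + 1) * v (m + 2)) *
          shiftWord v m := by
        rw [stepWord, hv.shiftWordRev_succ (by omega), hv.shiftWord_succ hm,
          hv.shiftWord_succ (by omega)]
        simp only [mul_assoc]
    _ = v (m + 3) * (shiftWordRev v m * (v (m + 1) * v (m + 2)) * shiftWord v m) * v (m + 3) := by
        rw [hword]
        simp only [mul_assoc]
        rw [← (hv.commute_shiftWordRev hm).left_comm, (hv.commute_shiftWord hm).eq]
    _ = v (m + 3) * stepWord v m * v (m + 3) := by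
        rw [stepWord, hv.shiftWord_succ (by omega)]
        simp only [mul_assoc]

theorem stepWordRev_succ {m : ℕ} (hm : m + 3 ≤ n - 1) :
    stepWordRev v (m + 1) = v (m + 3) * stepWordRev v m * v (m + 3) := by
  have hword : v (m + 2) * v (m + 1) * v (m + 3) * v (m + 2) * v (m + 1) * v (m + 2) =
      v (m + 3) * v (m + 2) * v (m + 1) * v (m + 3) :=
    braid_shift_right (hv.braid _ (by omega) (by omega)) (hv.braid _ (by omega) (by omega))
      (hv.comm _ _ (by omega) hm (by omega)) (hv.sq _ (by omega) (by omega))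
  calc stepWordRev v (m + 1)
      = shiftWordRev v m *
          (v (m + 2) * v (m + 1) * v (m + 3) * v (m + 2) * v (m + 1) * v (m + 2)) *
          shiftWord v m := by
        rw [stepWordRev, hv.shiftWordRev_succ (by omega), hv.shiftWordRev_succ (by omega),
          hv.shiftWord_succ (by omega)]
        simp only [mul_assoc]
    _ = v (m + 3) * (shiftWordRev v m * (v (m + 2) * v (m + 1)) * shiftWord v m) * v (m + 3) := by
        rw [hword]
        simp only [mul_assoc]
        rw [← (hv.commute_shiftWordRev hm).left_comm, (hv.commute_shiftWord hm).eq]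
    _ = v (m + 3) * stepWordRev v m * v (m + 3) := by
        rw [stepWordRev, hv.shiftWordRev_succ (by omega)]
        simp only [mul_assoc]

theorem braidPartner_succ {m : ℕ} (hm : m + 3 ≤ n - 1) (hσ : Commute σ (v (m + 3))) :
    braidPartner v σ (m + 1) = v (m + 3) * braidPartner v σ m * v (m + 3) := by
  rw [braidPartner, braidPartner, hv.stepWord_succ hm, hv.stepWordRev_succ hm]
  simp only [mul_assoc]
  rw [hσ.symm.left_comm, ← mul_assoc (v (m + 3)) (v (m + 3)), hv.sq _ (by omega) (by omega),
    one_mul]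

theorem braid_braidPartner (hσ : ∀ i, 3 ≤ i → i ≤ n - 1 → Commute σ (v i))
    (h₀ : 2 ≤ n - 1 → σ * (v 1 * v 2 * σ * v 2 * v 1) * σ =
      (v 1 * v 2 * σ * v 2 * v 1) * σ * (v 1 * v 2 * σ * v 2 * v 1))
    {m : ℕ} (hm : m + 2 ≤ n - 1) :
    σ * braidPartner v σ m * σ = braidPartner v σ m * σ * braidPartner v σ m := by
  induction m with
  | zero =>
    rw [braidPartner, hv.stepWord_zero hm, hv.stepWordRev_zero hm]
    simpa only [mul_assoc] using h₀ hm
  | succ m ih =>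
    rw [hv.braidPartner_succ hm (hσ _ (by omega) hm)]
    exact braid_conj_of_commute (hv.sq _ (by omega) hm) (hσ _ (by omega) hm) (ih (by omega))

end SymmetricRelations

theorem braid_relation_general {M : Type*} [Monoid M] (n : ℕ) (v : ℕ → M)
    (hvbraid : ∀ i j : ℕ, 1 ≤ i → i ≤ n - 1 → 1 ≤ j → j ≤ n - 1 → (i + 1 = j ∨ j + 1 = i) →
      v i * v j * v i = v j * v i * v j)
    (hvcomm : ∀ i j : ℕ, 1 ≤ i → i ≤ n - 1 → 1 ≤ j → j ≤ n - 1 → (i + 1 < j ∨ j + 1 < i) →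
      v i * v j = v j * v i)
    (hvsq : ∀ i : ℕ, 1 ≤ i → i ≤ n - 1 → v i * v i = 1)
    (σ : M)
    (hσv : ∀ i : ℕ, 3 ≤ i → i ≤ n - 1 → σ * v i = v i * σ)
    (hbraid_base : 2 ≤ n - 1 →
      σ * (v 1 * v 2 * σ * v 2 * v 1) * σ =
        (v 1 * v 2 * σ * v 2 * v 1) * σ * (v 1 * v 2 * σ * v 2 * v 1))
    (σs : ℕ → M)
    (hσ1 : σs 1 = σ)
    (hσdef : ∀ i : ℕ, 1 ≤ i → i ≤ n - 2 →
      σs (i + 1) = descV v 1 i * descV v 2 (i + 1) * σ * ascV v 2 (i + 1) * ascV v 1 i) :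
    ∀ i j : ℕ, 1 ≤ i → i ≤ n - 1 → 1 ≤ j → j ≤ n - 1 → (i + 1 = j ∨ j + 1 = i) →
      σs i * σs j * σs i = σs j * σs i * σs j := by
  have hv : SymmetricRelations n v :=
    ⟨fun i hi hi' => hvbraid i (i + 1) hi (by omega) (by omega) hi' (.inl rfl),
      fun i j hi hj hij => hvcomm i j hi (by omega) (by omega) hj (.inl hij), hvsq⟩
  have hσs : ∀ m, m + 1 ≤ n - 1 → σs (m + 1) = shiftWord v m * σ * shiftWordRev v m := by
    rintro (_ | m) hm
    · simp [hσ1, shiftWord, shiftWordRev, ascV, descV]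
    · rw [hσdef (m + 1) (by omega) (by omega), shiftWord, shiftWordRev]
      simp only [mul_assoc]
  have hadj : ∀ m, m + 2 ≤ n - 1 →
      σs (m + 1) * σs (m + 2) * σs (m + 1) = σs (m + 2) * σs (m + 1) * σs (m + 2) := by
    intro m hm
    rw [hσs m (by omega), hσs (m + 1) hm, hv.shiftWord_conj_succ hm]
    exact braid_conj (hv.shiftWordRev_mul_shiftWord (by omega))
      (hv.braid_braidPartner hσv hbraid_base hm)
  rintro i j hi hi' hj hj' (rfl | rfl)
  · obtain ⟨m, rfl⟩ : ∃ m, i = m + 1 := ⟨i - 1, by omega⟩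
    exact hadj m (by omega)
  · obtain ⟨m, rfl⟩ : ∃ m, j = m + 1 := ⟨j - 1, by omega⟩
    exact (hadj m (by omega)).symm

/-- **Lemma 4.4.** For all `1 ≤ i, j ≤ n-1` with `|i-j| = 1`, the braid relation `σ_i σ_j σ_i = σ_j σ_i σ_j` holds in `M`. -/
theorem braid_relation {M : Type*} [Monoid M] (n : ℕ) (hn : 2 ≤ n) (v : ℕ → M)
    (hvbraid : ∀ i j : ℕ, 1 ≤ i → i ≤ n - 1 → 1 ≤ j → j ≤ n - 1 → (i + 1 = j ∨ j + 1 = i) →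
      v i * v j * v i = v j * v i * v j)
    (hvcomm : ∀ i j : ℕ, 1 ≤ i → i ≤ n - 1 → 1 ≤ j → j ≤ n - 1 → (i + 1 < j ∨ j + 1 < i) →
      v i * v j = v j * v i)
    (hvsq : ∀ i : ℕ, 1 ≤ i → i ≤ n - 1 → v i * v i = 1)
    (σ σ' τ : M)
    (hcomm_στ : σ * τ = τ * σ)
    (hinv : σ * σ' = 1) (hinv' : σ' * σ = 1)
    (hτv : ∀ i : ℕ, 3 ≤ i → i ≤ n - 1 → τ * v i = v i * τ)
    (hσv : ∀ i : ℕ, 3 ≤ i → i ≤ n - 1 → σ * v i = v i * σ)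
    (hbraid_base : 2 ≤ n - 1 →
      σ * (v 1 * v 2 * σ * v 2 * v 1) * σ =
        (v 1 * v 2 * σ * v 2 * v 1) * σ * (v 1 * v 2 * σ * v 2 * v 1))
    (hmixed_base : 2 ≤ n - 1 →
      τ * (v 1 * v 2 * σ * v 2 * v 1) * σ =
        (v 1 * v 2 * σ * v 2 * v 1) * σ * (v 1 * v 2 * τ * v 2 * v 1))
    (hfar_σσ : 3 ≤ n - 1 →
      σ * (v 2 * v 3 * v 1 * v 2 * σ * v 2 * v 1 * v 3 * v 2) =
        (v 2 * v 3 * v 1 * v 2 * σ * v 2 * v 1 * v 3 * v 2) * σ)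
    (hfar_τσ : 3 ≤ n - 1 →
      τ * (v 2 * v 3 * v 1 * v 2 * σ * v 2 * v 1 * v 3 * v 2) =
        (v 2 * v 3 * v 1 * v 2 * σ * v 2 * v 1 * v 3 * v 2) * τ)
    (hfar_ττ : 3 ≤ n - 1 →
      τ * (v 2 * v 3 * v 1 * v 2 * τ * v 2 * v 1 * v 3 * v 2) =
        (v 2 * v 3 * v 1 * v 2 * τ * v 2 * v 1 * v 3 * v 2) * τ)
    (σs σs' τs : ℕ → M)
    (hσ1 : σs 1 = σ) (hσ'1 : σs' 1 = σ') (hτ1 : τs 1 = τ)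
    (hσdef : ∀ i : ℕ, 1 ≤ i → i ≤ n - 2 →
      σs (i + 1) = descV v 1 i * descV v 2 (i + 1) * σ * ascV v 2 (i + 1) * ascV v 1 i)
    (hσ'def : ∀ i : ℕ, 1 ≤ i → i ≤ n - 2 →
      σs' (i + 1) = descV v 1 i * descV v 2 (i + 1) * σ' * ascV v 2 (i + 1) * ascV v 1 i)
    (hτdef : ∀ i : ℕ, 1 ≤ i → i ≤ n - 2 →
      τs (i + 1) = descV v 1 i * descV v 2 (i + 1) * τ * ascV v 2 (i + 1) * ascV v 1 i) :
    ∀ i j : ℕ, 1 ≤ i → i ≤ n - 1 → 1 ≤ j → j ≤ n - 1 → (i + 1 = j ∨ j + 1 = i) →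
      σs i * σs j * σs i = σs j * σs i * σs j :=
  braid_relation_general n v hvbraid hvcomm hvsq σ hσv hbraid_base σs hσ1 hσdef

end VSBpaper
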